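/- Let u : ℝ × ℝ³ → ℝ³ be twice continuously differentiable (jointly in (t,x)) and let p̃ : ℝ × ℝ³ → ℝ be continuously differentiable. Suppose that for all t ∈ ℝ and x ∈ Ω = [0,1]³ the ideal (Euler) equations hold: ∂ₜu − u × (curl u) + ∇(½|u|² + p̃) = 0 and div u = 0, together with the boundary conditions u × n = 0 and ½|u|² + p̃ = 0 on ∂Ω for all t. Then the fluid helicity is conserved: for every t ∈ ℝ, ∫_Ω u(t,x) · (curl u(t,·))(x) dx = ∫_Ω u(0,x) · (curl u(0,·))(x) dx. -/

import Mathlib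

open MeasureTheory

noncomputable section

/-- Points of ℝ³, represented as functions `Fin 3 → ℝ`. -/
abbrev R3 : Type := Fin 3 → ℝ

/-- Partial derivative in the `i`-th coordinate direction. -/
noncomputable def pd (i : Fin 3) (f : R3 → ℝ) (x : R3) : ℝ :=
  fderiv ℝ f x (Pi.single i 1)

/-- Curl of a vector field on ℝ³. -/
noncomputable def vcurl (v : R3 → R3) (x : R3) : R3 :=
  ![pd 1 (fun y => v y 2) x - pd 2 (fun y => v y 1) x,
    pd 2 (fun y => v y 0) x - pd 0 (fun y => v y 2) x,
    pd 0 (fun y => v y 1) x - pd 1 (fun y => v y 0) x]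

/-- Divergence of a vector field on ℝ³. -/
noncomputable def vdiv (v : R3 → R3) (x : R3) : ℝ :=
  pd 0 (fun y => v y 0) x + pd 1 (fun y => v y 1) x + pd 2 (fun y => v y 2) x

/-- Gradient of a scalar field on ℝ³. -/
noncomputable def vgrad (f : R3 → ℝ) (x : R3) : R3 := fun i => pd i f x

/-- Euclidean dot product on ℝ³. -/
def dot3 (a b : R3) : ℝ := a 0 * b 0 + a 1 * b 1 + a 2 * b 2

/-- Cross product on ℝ³. -/
def cross3 (a b : R3) : R3 :=
  ![a 1 * b 2 - a 2 * b 1, a 2 * b 0 - a 0 * b 2, a 0 * b 1 - a 1 * b 0]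

/-- The closed unit cube Ω = [0,1]³. -/
def cube : Set R3 := Set.Icc 0 1

/-- `x` lies on one of the two faces of the cube orthogonal to direction `i`. -/
def onFace (x : R3) (i : Fin 3) : Prop := x i = 0 ∨ x i = 1

/-- `x` lies on the boundary ∂Ω of the cube. -/
def onBdry (x : R3) : Prop := x ∈ cube ∧ ∃ i : Fin 3, onFace x i

/-- Tangential boundary condition `v × n = 0` on ∂Ω: on each face of the cube
the two components of `v` tangential to that face vanish. -/
def TangentialBC (v : R3 → R3) : Prop :=
  ∀ x ∈ cube, ∀ i : Fin 3, onFace x i → ∀ j : Fin 3, j ≠ i → v x j = 0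

/-- Normal boundary condition `v · n = 0` on ∂Ω: on each face of the cube
the component of `v` normal to that face vanishes. -/
def NormalBC (v : R3 → R3) : Prop :=
  ∀ x ∈ cube, ∀ i : Fin 3, onFace x i → v x i = 0

/-- Time derivative ∂ₜu of a time-dependent vector field. -/
noncomputable def dtv (u : ℝ → R3 → R3) (t : ℝ) (x : R3) : R3 :=
  fun i => deriv (fun s => u s x i) t


/-!
Write `ω = curl u` and `q = ½|u|² + p̃`. Since `u` is `C²`, time and space derivatives commute,
so the helicity density `u · ω` has time derivative `∂ₜu · ω + u · curl ∂ₜu`. The momentum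
equation says `∇q = u × ω - ∂ₜu`; together with `div ω = 0` and `(u × ω) · ω = 0` this makes
the time derivative the divergence of the flux `W = ∂ₜu × u - 2 q ω`. On a face of the cube
`q = 0`, and the normal component of `∂ₜu × u` involves only the tangential components of `u`,
which vanish there; so `W · n = 0` and, by the divergence theorem, the helicity is constant.
-/

open Function

section VectorAlgebra

theorem cross3_apply_eq_zero {a b : R3} {i : Fin 3} (hb : ∀ j, j ≠ i → b j = 0) :
    cross3 a b i = 0 := by
  fin_cases i <;> simp [cross3, hb 0, hb 1, hb 2]

theorem dot3_cross3_self (a b : R3) : dot3 (cross3 a b) b = 0 := by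
  simp only [dot3, cross3, Matrix.cons_val_zero, Matrix.cons_val_one, Matrix.cons_val_two,
    Matrix.head_cons, Matrix.tail_cons]
  ring

theorem HasDerivAt.dot3 {a b : ℝ → R3} {a' b' : R3} {t : ℝ} (ha : HasDerivAt a a' t)
    (hb : HasDerivAt b b' t) :
    HasDerivAt (fun s => dot3 (a s) (b s)) (dot3 a' (b t) + dot3 (a t) b') t := by
  have ha' (j : Fin 3) := hasDerivAt_pi.1 ha j
  have hb' (j : Fin 3) := hasDerivAt_pi.1 hb j
  exact ((((ha' 0).mul (hb' 0)).add ((ha' 1).mul (hb' 1))).add ((ha' 2).mul (hb' 2))).congr_deriv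
    (by simp only [_root_.dot3]; ring)

theorem ContDiff.dot3 {E : Type*} [NormedAddCommGroup E] [NormedSpace ℝ E] {n : WithTop ℕ∞}
    {a b : E → R3} (ha : ContDiff ℝ n a) (hb : ContDiff ℝ n b) :
    ContDiff ℝ n fun x => dot3 (a x) (b x) := by
  unfold _root_.dot3
  fun_prop

theorem DifferentiableAt.cross3 {a b : R3 → R3} {x : R3} (ha : DifferentiableAt ℝ a x)
    (hb : DifferentiableAt ℝ b x) : DifferentiableAt ℝ (fun y => cross3 (a y) (b y)) x := by
  have ha' (j : Fin 3) := differentiableAt_pi.1 ha j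
  have hb' (j : Fin 3) := differentiableAt_pi.1 hb j
  refine differentiableAt_pi.2 fun j => ?_
  fin_cases j
  · exact ((ha' 1).mul (hb' 2)).sub ((ha' 2).mul (hb' 1))
  · exact ((ha' 2).mul (hb' 0)).sub ((ha' 0).mul (hb' 2))
  · exact ((ha' 0).mul (hb' 1)).sub ((ha' 1).mul (hb' 0))

theorem ContDiff.cross3 {n : WithTop ℕ∞} {a b : R3 → R3} (ha : ContDiff ℝ n a)
    (hb : ContDiff ℝ n b) : ContDiff ℝ n (fun y => cross3 (a y) (b y)) := by
  have ha' (j : Fin 3) := contDiff_pi.1 ha j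
  have hb' (j : Fin 3) := contDiff_pi.1 hb j
  refine contDiff_pi.2 fun j => ?_
  fin_cases j
  · exact ((ha' 1).mul (hb' 2)).sub ((ha' 2).mul (hb' 1))
  · exact ((ha' 2).mul (hb' 0)).sub ((ha' 0).mul (hb' 2))
  · exact ((ha' 0).mul (hb' 1)).sub ((ha' 1).mul (hb' 0))

end VectorAlgebra

section CoordinateCalculus

variable {f g : R3 → ℝ} {a b : R3 → R3} {x : R3}

theorem pd_sub (hf : DifferentiableAt ℝ f x) (hg : DifferentiableAt ℝ g x) (i : Fin 3) :
    pd i (fun y => f y - g y) x = pd i f x - pd i g x := by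
  simp [pd, fderiv_fun_sub hf hg]

theorem pd_mul (hf : DifferentiableAt ℝ f x) (hg : DifferentiableAt ℝ g x) (i : Fin 3) :
    pd i (fun y => f y * g y) x = pd i f x * g x + f x * pd i g x := by
  simp only [pd, fderiv_fun_mul hf hg, add_apply, smul_apply, smul_eq_mul]
  ring

theorem contDiff_pd {n m : WithTop ℕ∞} (hf : ContDiff ℝ n f) (hmn : m + 1 ≤ n) (i : Fin 3) :
    ContDiff ℝ m (pd i f) :=
  (hf.fderiv_right hmn).clm_apply contDiff_const

theorem pd_pd_comm (hf : ContDiff ℝ 2 f) (i j : Fin 3) :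
    pd i (pd j f) x = pd j (pd i f) x := by
  have hD : HasFDerivAt (fderiv ℝ f) (fderiv ℝ (fderiv ℝ f) x) x :=
    ((hf.fderiv_right le_rfl).differentiable one_ne_zero x).hasFDerivAt
  have hpd (k : Fin 3) : HasFDerivAt (fun y => fderiv ℝ f y (Pi.single k 1))
      ((fderiv ℝ (fderiv ℝ f) x).flip (Pi.single k 1)) x := by
    simpa using hD.clm_apply (hasFDerivAt_const (Pi.single k (1 : ℝ)) x)
  change fderiv ℝ (fun y => fderiv ℝ f y (Pi.single j 1)) x (Pi.single i 1)
    = fderiv ℝ (fun y => fderiv ℝ f y (Pi.single i 1)) x (Pi.single j 1)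
  simp only [(hpd _).fderiv, ContinuousLinearMap.flip_apply]
  exact (hf.contDiffAt.isSymmSndFDerivAt (by simp)) _ _

theorem contDiff_vcurl {n m : WithTop ℕ∞} (ha : ContDiff ℝ n a) (hmn : m + 1 ≤ n) :
    ContDiff ℝ m (vcurl a) := by
  have h (i j : Fin 3) : ContDiff ℝ m (pd i fun y => a y j) :=
    contDiff_pd (contDiff_pi.1 ha j) hmn i
  refine contDiff_pi.2 fun j => ?_
  fin_cases j
  · exact (h 1 2).sub (h 2 1)
  · exact (h 2 0).sub (h 0 2)
  · exact (h 0 1).sub (h 1 0)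

theorem vdiv_sub (ha : DifferentiableAt ℝ a x) (hb : DifferentiableAt ℝ b x) :
    vdiv (fun y => a y - b y) x = vdiv a x - vdiv b x := by
  simp (disch := fun_prop) only [vdiv, Pi.sub_apply, pd_sub]
  ring

theorem vdiv_smul (hf : DifferentiableAt ℝ f x) (ha : DifferentiableAt ℝ a x) :
    vdiv (fun y => f y • a y) x = dot3 (vgrad f x) (a x) + f x * vdiv a x := by
  simp (disch := fun_prop) only [vdiv, Pi.smul_apply, smul_eq_mul, pd_mul]
  simp only [dot3, vgrad]
  ring

theorem vdiv_cross3 (ha : DifferentiableAt ℝ a x) (hb : DifferentiableAt ℝ b x) :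
    vdiv (fun y => cross3 (a y) (b y)) x = dot3 (b x) (vcurl a x) - dot3 (a x) (vcurl b x) := by
  simp (disch := fun_prop) only [vdiv, cross3, Matrix.cons_val_zero, Matrix.cons_val_one,
    Matrix.cons_val_two, Matrix.head_cons, Matrix.tail_cons, pd_sub, pd_mul]
  simp only [dot3, vcurl, Matrix.cons_val_zero, Matrix.cons_val_one,
    Matrix.cons_val_two, Matrix.head_cons, Matrix.tail_cons]
  ring

theorem vdiv_vcurl (ha : ContDiff ℝ 2 a) : vdiv (vcurl a) x = 0 := by
  have h (i j : Fin 3) : Differentiable ℝ (pd i fun y => a y j) :=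
    (contDiff_pd (m := 1) (contDiff_pi.1 ha j) le_rfl i).differentiable one_ne_zero
  have hc (i j k : Fin 3) := pd_pd_comm (x := x) (contDiff_pi.1 ha j) i k
  simp only [vdiv, vcurl, Matrix.cons_val_zero, Matrix.cons_val_one,
    Matrix.cons_val_two, Matrix.head_cons, Matrix.tail_cons]
  rw [pd_sub (h _ _ x) (h _ _ x), pd_sub (h _ _ x) (h _ _ x), pd_sub (h _ _ x) (h _ _ x),
    hc 0 2 1, hc 1 0 2, hc 2 1 0]
  ring

theorem integral_vdiv_eq_zero_of_normalBC (ha : ContDiff ℝ 1 a) (hbc : NormalBC a) :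
    ∫ x in cube, vdiv a x = 0 := by
  have hai (i : Fin 3) : ContDiff ℝ 1 fun y => a y i := contDiff_pi.1 ha i
  have hdiv (x : R3) : vdiv a x = ∑ i : Fin 3, fderiv ℝ (fun y => a y i) x (Pi.single i 1) := by
    rw [Fin.sum_univ_three]
    rfl
  have hcont : Continuous (vdiv a) := by
    have h (i : Fin 3) : Continuous (pd i fun y => a y i) :=
      (contDiff_pd (m := 0) (hai i) (by simp) i).continuous
    exact ((h 0).add (h 1)).add (h 2)
  have hface (i : Fin 3) (c : ℝ) (hc : c = 0 ∨ c = 1) :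
      ∫ y in Set.Icc ((0 : R3) ∘ i.succAbove) ((1 : R3) ∘ i.succAbove),
        a (i.insertNth c y) i = 0 := by
    refine setIntegral_eq_zero_of_forall_eq_zero fun y hy => hbc _ ?_ i ?_
    · refine Fin.insertNth_mem_Icc.2 ⟨?_, hy⟩
      rcases hc with rfl | rfl <;> simp
    · simpa [onFace] using hc
  rw [cube, funext hdiv, integral_divergence_of_hasFDerivAt_off_countable' (a := 0) (b := 1)
    zero_le_one (fun i y => a y i) (fun i y => fderiv ℝ (fun z => a z i) y) ∅ Set.countable_empty
    (fun i => (hai i).continuous.continuousOn)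
    (fun x _ i => ((hai i).differentiable one_ne_zero x).hasFDerivAt)
    (by rw [← funext hdiv]; exact hcont.continuousOn.integrableOn_compact isCompact_Icc)]
  refine Finset.sum_eq_zero fun i _ => ?_
  rw [Pi.one_apply, Pi.zero_apply, hface i 1 (Or.inr rfl), hface i 0 (Or.inl rfl), sub_zero]

end CoordinateCalculus

section Slices

variable {E G : Type*} [NormedAddCommGroup E] [NormedSpace ℝ E]
  [NormedAddCommGroup G] [NormedSpace ℝ G] {F : ℝ → E → G}

theorem fderiv_slice_apply (hF : Differentiable ℝ (uncurry F)) (s : ℝ) (y v : E) :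
    fderiv ℝ (F s) y v = fderiv ℝ (uncurry F) (s, y) (0, v) := by
  have h : HasFDerivAt (F s) ((fderiv ℝ (uncurry F) (s, y)).comp (.inr ℝ ℝ E)) y :=
    (hF (s, y)).hasFDerivAt.comp y (hasFDerivAt_prodMk_right s y)
  simp [h.fderiv]

theorem hasDerivAt_slice (hF : Differentiable ℝ (uncurry F)) (t : ℝ) (y : E) :
    HasDerivAt (fun s => F s y) (fderiv ℝ (uncurry F) (t, y) (1, 0)) t := by
  have h := (hF (t, y)).hasFDerivAt.comp t (hasFDerivAt_prodMk_left (𝕜 := ℝ) t y)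
  simpa [Function.comp_def] using h.hasDerivAt

theorem contDiff_fderiv_slice_apply {n m : WithTop ℕ∞} (hF : ContDiff ℝ n (uncurry F))
    (hmn : m + 1 ≤ n) (v : E) :
    ContDiff ℝ m fun p : ℝ × E => fderiv ℝ (F p.1) p.2 v := by
  simp only [fderiv_slice_apply (hF.differentiable (by rintro rfl; simp at hmn))]
  exact (hF.fderiv_right hmn).clm_apply contDiff_const

theorem contDiff_deriv_slice {n m : WithTop ℕ∞} (hF : ContDiff ℝ n (uncurry F))
    (hmn : m + 1 ≤ n) (t : ℝ) :
    ContDiff ℝ m fun y => deriv (fun s => F s y) t := by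
  have hF1 : Differentiable ℝ (uncurry F) := hF.differentiable (by rintro rfl; simp at hmn)
  simp only [fun y => (hasDerivAt_slice hF1 t y).deriv]
  exact ((hF.fderiv_right hmn).comp (contDiff_prodMk_right t)).clm_apply contDiff_const

/-- `∂ₜ ∂ₓ F = ∂ₓ ∂ₜ F`, from the symmetry of the second derivative of `uncurry F`. -/
theorem hasDerivAt_fderiv_slice_apply (hF : ContDiff ℝ 2 (uncurry F)) (t : ℝ) (x v : E) :
    HasDerivAt (fun s => fderiv ℝ (F s) x v)
      (fderiv ℝ (fun y => deriv (fun s => F s y) t) x v) t := by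
  have hF1 : Differentiable ℝ (uncurry F) := hF.differentiable two_ne_zero
  have hD : Differentiable ℝ (fderiv ℝ (uncurry F)) :=
    (hF.fderiv_right le_rfl).differentiable one_ne_zero
  set D2 := fderiv ℝ (fderiv ℝ (uncurry F)) (t, x)
  have hspace : HasFDerivAt (fun y => deriv (fun s => F s y) t)
      ((D2.comp (.inr ℝ ℝ E)).flip (1, 0)) x := by
    simp only [fun y => (hasDerivAt_slice hF1 t y).deriv]
    have h := (hD (t, x)).hasFDerivAt.comp x (hasFDerivAt_prodMk_right (𝕜 := ℝ) t x)
    simpa using h.clm_apply (hasFDerivAt_const ((1 : ℝ), (0 : E)) x)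
  have htime :
      HasDerivAt (fun s => fderiv ℝ (uncurry F) (s, x) (0, v)) (D2 (1, 0) (0, v)) t := by
    have h := (hD (t, x)).hasFDerivAt.comp t (hasFDerivAt_prodMk_left (𝕜 := ℝ) t x)
    simpa using (h.clm_apply (hasFDerivAt_const ((0 : ℝ), v) t)).hasDerivAt
  simp only [fderiv_slice_apply hF1, hspace.fderiv]
  simpa [D2, (hF.contDiffAt.isSymmSndFDerivAt (by simp)) (0, v) (1, 0)] using htime

theorem hasDerivAt_setIntegral_of_contDiff [MeasurableSpace E] [BorelSpace E] {μ : Measure E}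
    [IsFiniteMeasureOnCompacts μ] {K : Set E} (hK : IsCompact K) {F : ℝ → E → ℝ}
    (hF : ContDiff ℝ 1 (uncurry F)) (t : ℝ) :
    HasDerivAt (fun s => ∫ x in K, F s x ∂μ) (∫ x in K, deriv (fun s => F s x) t ∂μ) t := by
  have hF1 : Differentiable ℝ (uncurry F) := hF.differentiable one_ne_zero
  have hF' : Continuous fun p : ℝ × E => fderiv ℝ (uncurry F) p (1, 0) :=
    (hF.continuous_fderiv one_ne_zero).clm_apply continuous_const
  obtain ⟨C, hC⟩ := ((isCompact_closedBall t 1).prod hK).exists_bound_of_continuousOn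
    hF'.continuousOn
  have hslice (s : ℝ) : Continuous (F s) := hF.continuous.comp (Continuous.prodMk_right s)
  simp only [fun x => (hasDerivAt_slice hF1 t x).deriv]
  refine (hasDerivAt_integral_of_dominated_loc_of_deriv_le (bound := fun _ => C)
    (Metric.ball_mem_nhds t one_pos)
    (.of_forall fun s => (hslice s).aestronglyMeasurable)
    ((hslice t).continuousOn.integrableOn_compact hK)
    (hF'.comp (Continuous.prodMk_right t)).aestronglyMeasurable
    ((ae_restrict_iff' hK.measurableSet).2 (.of_forall fun x hx s hs =>
      hC (s, x) ⟨Metric.ball_subset_closedBall hs, hx⟩))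
    (integrableOn_const hK.measure_lt_top.ne)
    (.of_forall fun x s _ => hasDerivAt_slice hF1 s x)).2

end Slices

section TimeDependentField

variable {u : ℝ → R3 → R3}

theorem contDiff_dtv {n m : WithTop ℕ∞} (hu : ContDiff ℝ n (uncurry u)) (hmn : m + 1 ≤ n)
    (t : ℝ) : ContDiff ℝ m (dtv u t) :=
  contDiff_pi.2 fun j => contDiff_deriv_slice (F := fun s y => u s y j) (contDiff_pi.1 hu j) hmn t

theorem hasDerivAt_dtv (hu : Differentiable ℝ (uncurry u)) (t : ℝ) (x : R3) :
    HasDerivAt (fun s => u s x) (dtv u t x) t :=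
  hasDerivAt_pi.2 fun j => (hasDerivAt_slice (F := fun s y => u s y j)
    (differentiable_pi.1 hu j) t x).differentiableAt.hasDerivAt

theorem hasDerivAt_vcurl_slice (hu : ContDiff ℝ 2 (uncurry u)) (t : ℝ) (x : R3) :
    HasDerivAt (fun s => vcurl (u s) x) (vcurl (dtv u t) x) t := by
  have h (i j : Fin 3) : HasDerivAt (fun s => pd i (fun y => u s y j) x)
      (pd i (fun y => dtv u t y j) x) t :=
    hasDerivAt_fderiv_slice_apply (F := fun s y => u s y j) (contDiff_pi.1 hu j) t x _
  refine hasDerivAt_pi.2 fun j => ?_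
  fin_cases j
  · exact (h 1 2).sub (h 2 1)
  · exact (h 2 0).sub (h 0 2)
  · exact (h 0 1).sub (h 1 0)

theorem contDiff_vcurl_slice (hu : ContDiff ℝ 2 (uncurry u)) :
    ContDiff ℝ 1 (uncurry fun s => vcurl (u s)) := by
  have h (i j : Fin 3) : ContDiff ℝ 1 fun p : ℝ × R3 => pd i (fun y => u p.1 y j) p.2 :=
    contDiff_fderiv_slice_apply (F := fun s y => u s y j) (contDiff_pi.1 hu j) le_rfl _
  refine contDiff_pi.2 fun j => ?_
  fin_cases j
  · exact (h 1 2).sub (h 2 1)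
  · exact (h 2 0).sub (h 0 2)
  · exact (h 0 1).sub (h 1 0)

theorem hasDerivAt_helicity (hu : ContDiff ℝ 2 (uncurry u)) (t : ℝ) :
    HasDerivAt (fun s => ∫ x in cube, dot3 (u s x) (vcurl (u s) x))
      (∫ x in cube, (dot3 (dtv u t x) (vcurl (u t) x) + dot3 (u t x) (vcurl (dtv u t) x))) t := by
  have hdensity : ContDiff ℝ 1 (uncurry fun s x => dot3 (u s x) (vcurl (u s) x)) :=
    (hu.of_le one_le_two).dot3 (contDiff_vcurl_slice hu)
  simpa only [fun x => ((hasDerivAt_dtv (hu.differentiable two_ne_zero) t x).dot3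
      (hasDerivAt_vcurl_slice hu t x)).deriv]
    using hasDerivAt_setIntegral_of_contDiff (μ := volume) (K := cube) isCompact_Icc hdensity t

end TimeDependentField

section HelicityFlux

/-- The flux `W = ∂ₜu × u - 2 q ω`, for `U = u t`, `V = ∂ₜu t` and `q = ½|u t|² + p̃ t`. -/
def helicityFlux (U V : R3 → R3) (q : R3 → ℝ) : R3 → R3 :=
  fun y => cross3 (V y) (U y) - (2 * q y) • vcurl U y

variable {U V : R3 → R3} {q : R3 → ℝ}

theorem vdiv_helicityFlux {x : R3} (hU : ContDiff ℝ 2 U) (hV : DifferentiableAt ℝ V x)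
    (hq : DifferentiableAt ℝ q x) (hmom : V x - cross3 (U x) (vcurl U x) + vgrad q x = 0) :
    vdiv (helicityFlux U V q) x = dot3 (V x) (vcurl U x) + dot3 (U x) (vcurl V x) := by
  have hUx : DifferentiableAt ℝ U x := hU.differentiable two_ne_zero x
  have hω : Differentiable ℝ (vcurl U) :=
    (contDiff_vcurl (m := 1) hU le_rfl).differentiable one_ne_zero
  have hgrad : vgrad (fun y => 2 * q y) x = (2 : ℝ) • (cross3 (U x) (vcurl U x) - V x) := by
    have hgq : vgrad q x = cross3 (U x) (vcurl U x) - V x := by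
      rw [← sub_eq_zero, ← hmom]
      abel
    ext i
    simp [vgrad, pd, fderiv_const_mul hq, ← hgq]
  unfold helicityFlux
  rw [vdiv_sub (hV.cross3 hUx) (by fun_prop), vdiv_cross3 hV hUx,
    vdiv_smul (by fun_prop) (hω x), vdiv_vcurl hU, hgrad]
  have hω_perp := dot3_cross3_self (U x) (vcurl U x)
  simp only [dot3, Pi.smul_apply, Pi.sub_apply, smul_eq_mul] at hω_perp ⊢
  linear_combination (-2) * hω_perp

theorem contDiff_helicityFlux (hU : ContDiff ℝ 2 U) (hV : ContDiff ℝ 1 V) (hq : ContDiff ℝ 1 q) :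
    ContDiff ℝ 1 (helicityFlux U V q) :=
  (hV.cross3 (hU.of_le one_le_two)).sub ((contDiff_const.mul hq).smul (contDiff_vcurl hU le_rfl))

theorem normalBC_helicityFlux (hU : TangentialBC U) (hq : ∀ x, onBdry x → q x = 0) :
    NormalBC (helicityFlux U V q) := by
  intro x hx i hi
  simp [helicityFlux, hq x ⟨hx, i, hi⟩, cross3_apply_eq_zero (hU x hx i hi)]

end HelicityFlux

theorem euler_helicity_conservation_general
    (u : ℝ → R3 → R3) (pt : ℝ → R3 → ℝ)
    (hu : ContDiff ℝ 2 (Function.uncurry u))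
    (hp : ContDiff ℝ 1 (Function.uncurry pt))
    (hmom : ∀ t : ℝ, ∀ x ∈ cube,
      dtv u t x - cross3 (u t x) (vcurl (u t) x)
        + vgrad (fun y => (1 / 2) * dot3 (u t y) (u t y) + pt t y) x = 0)
    (hbcu : ∀ t : ℝ, TangentialBC (u t))
    (hbcp : ∀ t : ℝ, ∀ x : R3, onBdry x →
      (1 / 2) * dot3 (u t x) (u t x) + pt t x = 0) :
    ∀ t : ℝ,
      ∫ x in cube, dot3 (u t x) (vcurl (u t) x)
        = ∫ x in cube, dot3 (u 0 x) (vcurl (u 0) x) := by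
  intro t
  refine is_const_of_deriv_eq_zero (fun s => (hasDerivAt_helicity hu s).differentiableAt)
    (fun s => ?_) t 0
  have hU : ContDiff ℝ 2 (u s) := hu.comp (contDiff_prodMk_right s)
  have hV : ContDiff ℝ 1 (dtv u s) := contDiff_dtv hu le_rfl s
  have hq : ContDiff ℝ 1 fun y => (1 / 2) * dot3 (u s y) (u s y) + pt s y :=
    (contDiff_const.mul ((hU.of_le one_le_two).dot3 (hU.of_le one_le_two))).add
      (hp.comp (contDiff_prodMk_right s))
  rw [(hasDerivAt_helicity hu s).deriv, setIntegral_congr_fun (s := cube) measurableSet_Icc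
    fun x hx => (vdiv_helicityFlux hU (hV.differentiable one_ne_zero x)
      (hq.differentiable one_ne_zero x) (hmom s x hx)).symm]
  exact integral_vdiv_eq_zero_of_normalBC (contDiff_helicityFlux hU hV hq)
    (normalBC_helicityFlux (hbcu s) (hbcp s))

/-- For the ideal (Euler) equations on the unit cube, the fluid helicity is
conserved in time. -/
theorem euler_helicity_conservation
    (u : ℝ → R3 → R3) (pt : ℝ → R3 → ℝ)
    (hu : ContDiff ℝ 2 (Function.uncurry u))
    (hp : ContDiff ℝ 1 (Function.uncurry pt))
    (hmom : ∀ t : ℝ, ∀ x ∈ cube,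
      dtv u t x - cross3 (u t x) (vcurl (u t) x)
        + vgrad (fun y => (1 / 2) * dot3 (u t y) (u t y) + pt t y) x = 0)
    (hdiv : ∀ t : ℝ, ∀ x ∈ cube, vdiv (u t) x = 0)
    (hbcu : ∀ t : ℝ, TangentialBC (u t))
    (hbcp : ∀ t : ℝ, ∀ x : R3, onBdry x →
      (1 / 2) * dot3 (u t x) (u t x) + pt t x = 0) :
    ∀ t : ℝ,
      ∫ x in cube, dot3 (u t x) (vcurl (u t) x)
        = ∫ x in cube, dot3 (u 0 x) (vcurl (u 0) x) :=
  euler_helicity_conservation_general u pt hu hp hmom hbcu hbcp
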